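/- arXiv:2010.06809 — 2 statements merged into one kernel-verified Lean document; each statement's English description precedes it below -/
import Mathlib

section
/- For every connected simple graph G, mc(G) ≤ m - n + χ(G), where χ(G) is the chromatic number of G. -/
open SimpleGraph

def IsMCColoring {V : Type*} (G : SimpleGraph V) (c : Sym2 V → ℕ) : Prop :=
  ∀ u v : V, ∃ p : G.Walk u v, ∃ k : ℕ, ∀ e ∈ p.edges, c e = k

noncomputable def mcNumber {V : Type*} (G : SimpleGraph V) : ℕ :=
  sSup {n : ℕ | ∃ c : Sym2 V → ℕ, IsMCColoring G c ∧ Nat.card (c '' G.edgeSet) = n}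

def IsKConnected {V : Type*} [Fintype V] (G : SimpleGraph V) (k : ℕ) : Prop :=
  k < Fintype.card V ∧ ∀ S : Finset V, S.card < k →
    ((⊤ : G.Subgraph).deleteVerts ↑S).coe.Connected

def graphJoin {α β : Type*} (G₁ : SimpleGraph α) (G₂ : SimpleGraph β) :
    SimpleGraph (α ⊕ β) where
  Adj x y :=
    match x, y with
    | Sum.inl a, Sum.inl b => G₁.Adj a b
    | Sum.inr a, Sum.inr b => G₂.Adj a b
    | _, _ => True
  symm := ⟨by rintro (a|a) (b|b) h <;> first | exact h.symm | trivial⟩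
  loopless := ⟨by rintro (a|a) h <;> first | exact G₁.loopless.irrefl a h | exact G₂.loopless.irrefl a h⟩

def IsMinor {β α : Type*} (H : SimpleGraph β) (G : SimpleGraph α) : Prop :=
  ∃ f : β → Set α,
    (∀ b, (f b).Nonempty) ∧
    (∀ b, (G.induce (f b)).Connected) ∧
    (∀ b₁ b₂, b₁ ≠ b₂ → Disjoint (f b₁) (f b₂)) ∧
    (∀ b₁ b₂, H.Adj b₁ b₂ → ∃ x ∈ f b₁, ∃ y ∈ f b₂, G.Adj x y)

def IsPlanar {α : Type*} (G : SimpleGraph α) : Prop :=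
  ¬ IsMinor (completeGraph (Fin 5)) G ∧
  ¬ IsMinor (completeBipartiteGraph (Fin 3) (Fin 3)) G

def IsOuterplanar {α : Type*} (G : SimpleGraph α) : Prop :=
  ¬ IsMinor (completeGraph (Fin 4)) G ∧
  ¬ IsMinor (completeBipartiteGraph (Fin 2) (Fin 3)) G

def PerfectlyConnected {V : Type*} (G : SimpleGraph V) (s : ℕ) : Prop :=
  ∃ (v : V) (P : Fin s → Set V),
    (∀ i, (P i).Nonempty) ∧
    (∀ i, v ∉ P i) ∧
    (Pairwise fun i j => Disjoint (P i) (P j)) ∧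
    (∀ x : V, x ≠ v → ∃ i, x ∈ P i) ∧
    (∀ i, (G.induce (P i)).Connected) ∧
    (∀ i j, i ≠ j → ∀ x ∈ P i, ∀ y ∈ P j, G.Adj x y) ∧
    (∀ i, ∃! u, u ∈ P i ∧ G.Adj v u)

open Finset

def colorSub {V : Type*} (G : SimpleGraph V) (c : Sym2 V → ℕ) (a : ℕ) : SimpleGraph V where
  Adj x y := G.Adj x y ∧ c s(x, y) = a
  symm := ⟨fun x y ⟨h, hc⟩ => ⟨h.symm, by rwa [Sym2.eq_swap]⟩⟩
  loopless := ⟨fun x ⟨h, _⟩ => G.loopless.irrefl x h⟩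

lemma colorSub_mem_edgeSet {V : Type*} (G : SimpleGraph V) (c : Sym2 V → ℕ) (a : ℕ)
    (e : Sym2 V) : e ∈ (colorSub G c a).edgeSet ↔ e ∈ G.edgeSet ∧ c e = a := by
  induction e using Sym2.ind with
  | _ x y => exact Iff.rfl

lemma exists_parent {V : Type*} (H : SimpleGraph V) {u w : V} (hr : H.Reachable u w)
    (hne : w ≠ u) :
    ∃ x, H.Adj x w ∧ H.Reachable u x ∧ H.dist u x < H.dist u w := by
  obtain ⟨p, hp⟩ := (hr.symm).exists_walk_length_eq_dist
  cases p with
  | nil => exact absurd rfl hne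
  | cons hadj q =>
      rename_i x
      refine ⟨x, hadj.symm, ⟨q.reverse⟩, ?_⟩
      have h1 : H.dist u x ≤ q.length := by
        simpa using SimpleGraph.dist_le q.reverse
      have h2 : q.length + 1 = H.dist w u := by simpa using hp
      rw [SimpleGraph.dist_comm (u := w) (v := u)] at h2
      omega

lemma aux_card {V : Type*} [DecidableEq V] (S : Finset V) (E : Finset (Sym2 V)) (u : V)
    (hu : u ∈ S) (par : V → V) (d : V → ℕ)
    (h : ∀ w ∈ S, w ≠ u → s(par w, w) ∈ E ∧ d (par w) < d w) :
    S.card ≤ E.card + 1 := by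
  have hinj : Set.InjOn (fun w => s(par w, w)) (S.erase u) := by
    intro w hw w' hw' he
    simp only at he
    rw [Sym2.eq_iff] at he
    rcases he with ⟨_, rfl⟩ | ⟨h1, h2⟩
    · rfl
    · have hw1 := (h w (Finset.mem_of_mem_erase hw) (Finset.ne_of_mem_erase hw)).2
      have hw2 := (h w' (Finset.mem_of_mem_erase hw') (Finset.ne_of_mem_erase hw')).2
      rw [h1] at hw1
      rw [← h2] at hw2
      omega
  have hle : (S.erase u).card ≤ E.card := by
    apply Finset.card_le_card_of_injOn (fun w => s(par w, w))
      (fun w hw => (h w (Finset.mem_of_mem_erase hw) (Finset.ne_of_mem_erase hw)).1) hinj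
  have := Finset.card_erase_of_mem hu
  omega

lemma key {V : Type*} [Fintype V] [DecidableEq V] (G : SimpleGraph V) [DecidableRel G.Adj]
    (hG : G.Connected) (χ : ℕ) (hcol : G.Colorable χ) (c : Sym2 V → ℕ)
    (hc : IsMCColoring G c) :
    (G.edgeFinset.image c).card + Fintype.card V ≤ G.edgeFinset.card + χ := by
  classical
  have hVne : Nonempty V := hG.nonempty
  obtain ⟨f⟩ := hcol
  set Cols : Finset ℕ := G.edgeFinset.image c with hCols
  -- representative of each proper color class
  have hrep0 : ∀ t : Fin χ, ∃ r : V, (∃ v : V, f v = t) → f r = t := by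
    intro t
    by_cases h : ∃ v : V, f v = t
    · exact ⟨h.choose, fun _ => h.choose_spec⟩
    · exact ⟨Classical.arbitrary V, fun hv => absurd hv h⟩
  choose rep hrep using hrep0
  have hrepf : ∀ v : V, f (rep (f v)) = f v := fun v => hrep (f v) ⟨v, rfl⟩
  set AV : Finset V := Finset.univ.filter (fun v => v ≠ rep (f v)) with hAV
  have hAVne : ∀ v ∈ AV, v ≠ rep (f v) := by
    intro v hv
    simpa [hAV] using hv
  have hrepAV : ∀ v : V, rep (f v) ∉ AV := by
    intro v h
    have h2 := hAVne _ h
    exact h2 (congrArg rep (hrepf v)).symm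
  -- monochromatic color + reachability data for each vertex of AV
  have hdata : ∀ v : V, ∃ aa : ℕ, v ∈ AV →
      aa ∈ Cols ∧ (colorSub G c aa).Reachable (rep (f v)) v := by
    intro v
    by_cases hv : v ∈ AV
    · have hvne : v ≠ rep (f v) := hAVne v hv
      obtain ⟨p, k, hk⟩ := hc (rep (f v)) v
      have hpedges : ∀ e ∈ p.edges, e ∈ (colorSub G c k).edgeSet := by
        intro e he
        rw [colorSub_mem_edgeSet]
        exact ⟨p.edges_subset_edgeSet he, hk e he⟩
      have hlen : p.length ≠ 0 := by
        intro h0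
        exact hvne (p.eq_of_length_eq_zero h0).symm
      have hedne : p.edges ≠ [] := by
        intro h0
        rw [← SimpleGraph.Walk.length_edges, h0] at hlen
        simp at hlen
      have hmem := List.head_mem hedne
      refine ⟨k, fun _ => ⟨?_, ⟨p.transfer _ hpedges⟩⟩⟩
      exact Finset.mem_image.mpr ⟨p.edges.head hedne,
        SimpleGraph.mem_edgeFinset.mpr (p.edges_subset_edgeSet hmem), hk _ hmem⟩
    · exact ⟨0, fun h => absurd h hv⟩
  choose aCol haCol using hdata
  set Blk : V → ℕ × Finset V := fun v =>
    (aCol v, Finset.univ.filter fun w => (colorSub G c (aCol v)).Reachable (rep (f v)) w)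
    with hBlk
  set T : Finset (ℕ × Finset V) := AV.image Blk with hT
  have hmemS : ∀ v ∈ AV, v ∈ (Blk v).2 ∧ rep (f v) ∈ (Blk v).2 := by
    intro v hv
    constructor
    · simp only [hBlk, Finset.mem_filter, Finset.mem_univ, true_and]
      exact (haCol v hv).2
    · simp only [hBlk, Finset.mem_filter, Finset.mem_univ, true_and]
      exact Reachable.refl _
  -- claim 2 : each block fiber has at least two non-members in the block
  have claim2 : ∀ b ∈ T, (AV.filter fun v => Blk v = b).card + 2 ≤ b.2.card := by
    intro b hb
    obtain ⟨v₀, hv₀, hbv₀⟩ := Finset.mem_image.mp hb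
    set F := AV.filter (fun v => Blk v = b) with hF
    have hmemF : ∀ v ∈ F, v ∈ b.2 ∧ rep (f v) ∈ b.2 ∧ v ∈ AV := by
      intro v hv
      have hvAV : v ∈ AV := (Finset.mem_filter.mp hv).1
      have hvb : Blk v = b := (Finset.mem_filter.mp hv).2
      obtain ⟨h1, h2⟩ := hmemS v hvAV
      rw [hvb] at h1 h2
      exact ⟨h1, h2, hvAV⟩
    have hrepnotF : ∀ v : V, rep (f v) ∉ F := by
      intro v hmem
      exact hrepAV v (Finset.mem_filter.mp hmem).1
    have htwo : ∃ x ∈ b.2, ∃ y ∈ b.2, x ≠ y ∧ x ∉ F ∧ y ∉ F := by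
      by_cases hcase : ∃ v₁ ∈ F, ∃ v₂ ∈ F, f v₁ ≠ f v₂
      · obtain ⟨v₁, hv₁, v₂, hv₂, hne⟩ := hcase
        refine ⟨rep (f v₁), (hmemF v₁ hv₁).2.1, rep (f v₂), (hmemF v₂ hv₂).2.1, ?_,
          hrepnotF v₁, hrepnotF v₂⟩
        intro heq
        apply hne
        have h3 := hrepf v₁
        rw [heq, hrepf v₂] at h3
        exact h3.symm
      · push_neg at hcase
        have hv₀F : v₀ ∈ F := Finset.mem_filter.mpr ⟨hv₀, hbv₀⟩
        have hreach : (colorSub G c (aCol v₀)).Reachable (rep (f v₀)) v₀ := (haCol v₀ hv₀).2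
        have hv₀ne : v₀ ≠ rep (f v₀) := hAVne v₀ hv₀
        obtain ⟨x, hadj, hreachx, _⟩ := exists_parent _ hreach hv₀ne
        have hx2 : x ∈ b.2 := by
          rw [← hbv₀]
          simp only [hBlk, Finset.mem_filter, Finset.mem_univ, true_and]
          exact hreachx
        have hfx : f x ≠ f v₀ := f.valid hadj.1
        refine ⟨rep (f v₀), (hmemF v₀ hv₀F).2.1, x, hx2, ?_, hrepnotF v₀, ?_⟩
        · intro heq
          apply hfx
          rw [← heq, hrepf v₀]
        · intro hxF
          exact hfx (hcase x hxF v₀ hv₀F)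
    obtain ⟨x, hx, y, hy, hxy, hxF, hyF⟩ := htwo
    have hsub : insert x (insert y F) ⊆ b.2 := by
      intro z hz
      rcases Finset.mem_insert.mp hz with rfl | hz'
      · exact hx
      · rcases Finset.mem_insert.mp hz' with rfl | hz''
        · exact hy
        · exact (hmemF z hz'').1
    have hcard : (insert x (insert y F)).card = F.card + 2 := by
      rw [Finset.card_insert_of_notMem (by simp [hxF, hxy]),
        Finset.card_insert_of_notMem hyF]
    calc F.card + 2 = (insert x (insert y F)).card := hcard.symm
      _ ≤ b.2.card := Finset.card_le_card hsub
  -- claim 3 : per color, block sizes are dominated by edge counts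
  have claim3 : ∀ a' ∈ Cols,
      (∑ b ∈ T.filter (fun b => b.1 = a'), (b.2.card - 2)) + 1 ≤
      (G.edgeFinset.filter fun e => c e = a').card := by
    intro a' ha'
    set Ea := G.edgeFinset.filter (fun e => c e = a') with hEa
    have hEa1 : 1 ≤ Ea.card := by
      obtain ⟨e, he, hce⟩ := Finset.mem_image.mp ha'
      exact Finset.card_pos.mpr ⟨e, Finset.mem_filter.mpr ⟨he, hce⟩⟩
    set Ta := T.filter (fun b => b.1 = a') with hTa
    rcases Ta.eq_empty_or_nonempty with hemp | hne'
    · rw [hemp]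
      simpa using hEa1
    · have hblock : ∀ b ∈ Ta, ∃ u : V,
          b.2 = Finset.univ.filter (fun w => (colorSub G c a').Reachable u w) ∧
          2 ≤ b.2.card := by
        intro b hb
        obtain ⟨hbT, hba⟩ := Finset.mem_filter.mp hb
        obtain ⟨v₀, hv₀, hbv₀⟩ := Finset.mem_image.mp hbT
        have hav₀ : aCol v₀ = a' := by rw [← hba, ← hbv₀]
        refine ⟨rep (f v₀), ?_, ?_⟩
        · rw [← hbv₀]
          simp only [hBlk]
          rw [hav₀]
        · have h1 : v₀ ∈ b.2 := by rw [← hbv₀]; exact (hmemS v₀ hv₀).1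
          have h2 : rep (f v₀) ∈ b.2 := by rw [← hbv₀]; exact (hmemS v₀ hv₀).2
          exact Finset.one_lt_card.mpr ⟨v₀, h1, rep (f v₀), h2, hAVne v₀ hv₀⟩
      set EB : ℕ × Finset V → Finset (Sym2 V) :=
        fun b => Ea.filter (fun e => ∀ x ∈ e, x ∈ b.2) with hEB
      have hcardEB : ∀ b ∈ Ta, b.2.card ≤ (EB b).card + 1 := by
        intro b hb
        obtain ⟨u, hSb, hc2⟩ := hblock b hb
        set H := colorSub G c a' with hH
        have hu : u ∈ b.2 := by
          rw [hSb]
          simp only [Finset.mem_filter, Finset.mem_univ, true_and]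
          exact Reachable.refl _
        have hpar0 : ∀ w : V, ∃ x : V, (w ∈ b.2 ∧ w ≠ u) →
            H.Adj x w ∧ H.Reachable u x ∧ H.dist u x < H.dist u w := by
          intro w
          by_cases hw : w ∈ b.2 ∧ w ≠ u
          · have hrw : H.Reachable u w := by
              have h3 := hw.1
              rw [hSb] at h3
              simpa using h3
            obtain ⟨x, h1, h2, h3⟩ := exists_parent H hrw hw.2
            exact ⟨x, fun _ => ⟨h1, h2, h3⟩⟩
          · exact ⟨w, fun h => absurd h hw⟩
        choose par hpar using hpar0
        apply aux_card b.2 (EB b) u hu par (H.dist u)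
        intro w hw hwne
        obtain ⟨h1, h2, h3⟩ := hpar w ⟨hw, hwne⟩
        refine ⟨?_, h3⟩
        refine Finset.mem_filter.mpr ⟨Finset.mem_filter.mpr
          ⟨SimpleGraph.mem_edgeFinset.mpr (G.mem_edgeSet.mpr h1.1), h1.2⟩, ?_⟩
        intro z hz
        rcases Sym2.mem_iff.mp hz with rfl | rfl
        · rw [hSb]
          simp only [Finset.mem_filter, Finset.mem_univ, true_and]
          exact h2
        · exact hw
      have hdisj : ∀ b₁ ∈ Ta, ∀ b₂ ∈ Ta, b₁ ≠ b₂ → Disjoint (EB b₁) (EB b₂) := by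
        intro b₁ hb₁ b₂ hb₂ hne12
        obtain ⟨u₁, hS1, _⟩ := hblock b₁ hb₁
        obtain ⟨u₂, hS2, _⟩ := hblock b₂ hb₂
        rw [Finset.disjoint_left]
        intro e he1 he2
        apply hne12
        obtain ⟨z, hz⟩ : ∃ z, z ∈ e := ⟨e.out.1, Sym2.out_fst_mem e⟩
        have hz1 : z ∈ b₁.2 := (Finset.mem_filter.mp he1).2 z hz
        have hz2 : z ∈ b₂.2 := (Finset.mem_filter.mp he2).2 z hz
        rw [hS1] at hz1
        rw [hS2] at hz2
        simp only [Finset.mem_filter, Finset.mem_univ, true_and] at hz1 hz2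
        have hSeq : b₁.2 = b₂.2 := by
          rw [hS1, hS2]
          ext w
          simp only [Finset.mem_filter, Finset.mem_univ, true_and]
          exact ⟨fun hw => hz2.trans (hz1.symm.trans hw),
            fun hw => hz1.trans (hz2.symm.trans hw)⟩
        have hfst : b₁.1 = b₂.1 := by
          rw [(Finset.mem_filter.mp hb₁).2, (Finset.mem_filter.mp hb₂).2]
        exact Prod.ext hfst hSeq
      have hsum1 : ∑ b ∈ Ta, (EB b).card ≤ Ea.card := by
        rw [← Finset.card_biUnion hdisj]
        apply Finset.card_le_card
        intro e he
        obtain ⟨b, hb, heb⟩ := Finset.mem_biUnion.mp he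
        exact (Finset.mem_filter.mp heb).1
      have hsum2 : (∑ b ∈ Ta, (b.2.card - 2)) + Ta.card ≤ ∑ b ∈ Ta, (EB b).card := by
        rw [Finset.card_eq_sum_ones, ← Finset.sum_add_distrib]
        apply Finset.sum_le_sum
        intro b hb
        have h1 := hcardEB b hb
        have h2 := (hblock b hb).choose_spec.2
        omega
      have hTa1 : 1 ≤ Ta.card := Finset.card_pos.mpr hne'
      omega
  -- assemble
  have claim1 : AV.card = ∑ b ∈ T, (AV.filter fun v => Blk v = b).card :=
    Finset.card_eq_sum_card_fiberwise (fun v hv => Finset.mem_image_of_mem _ hv)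
  have h1 : AV.card ≤ ∑ b ∈ T, (b.2.card - 2) := by
    rw [claim1]
    apply Finset.sum_le_sum
    intro b hb
    have := claim2 b hb
    omega
  have hmaps : ∀ b ∈ T, b.1 ∈ Cols := by
    intro b hb
    obtain ⟨v, hv, hbv⟩ := Finset.mem_image.mp hb
    rw [← hbv]
    exact (haCol v hv).1
  have h2 : ∑ a' ∈ Cols, ∑ b ∈ T.filter (fun b => b.1 = a'), (b.2.card - 2) =
      ∑ b ∈ T, (b.2.card - 2) :=
    Finset.sum_fiberwise_of_maps_to hmaps _
  have h4 : ∑ a' ∈ Cols, (G.edgeFinset.filter fun e => c e = a').card = G.edgeFinset.card :=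
    (Finset.card_eq_sum_card_fiberwise (fun e he => Finset.mem_image_of_mem c he)).symm
  have h5 : AV.card + Cols.card ≤ G.edgeFinset.card := by
    have hstep : ∑ a' ∈ Cols, ((∑ b ∈ T.filter (fun b => b.1 = a'), (b.2.card - 2)) + 1) ≤
        ∑ a' ∈ Cols, (G.edgeFinset.filter fun e => c e = a').card :=
      Finset.sum_le_sum claim3
    rw [Finset.sum_add_distrib, h2] at hstep
    simp only [Finset.sum_const, smul_eq_mul, mul_one] at hstep
    omega
  -- non-representative count
  have hNAV : Fintype.card V ≤ AV.card + χ := by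
    have hsplit : (Finset.univ.filter (fun v => v ≠ rep (f v))).card +
        (Finset.univ.filter (fun v => ¬ v ≠ rep (f v))).card = Fintype.card V := by
      rw [← Finset.card_univ]
      exact Finset.card_filter_add_card_filter_not _
    have hinj : Set.InjOn f (Finset.univ.filter (fun v => ¬ v ≠ rep (f v))) := by
      intro v hv w hw hfvw
      simp only [Finset.coe_filter, Set.mem_setOf_eq, not_not] at hv hw
      rw [hv.2, hw.2, hfvw]
    have hle : (Finset.univ.filter (fun v => ¬ v ≠ rep (f v))).card ≤ χ := by
      have h6 := Finset.card_le_card_of_injOn f (fun v _ => Finset.mem_univ (f v)) hinj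
      simpa using h6
    rw [hAV]
    omega
  omega

theorem stmt3 {V : Type*} [Fintype V] (G : SimpleGraph V) (hG : G.Connected)
    (χ : ℕ) (hχ : G.chromaticNumber = (χ : ℕ∞)) :
    (mcNumber G : ℤ) ≤ (Nat.card G.edgeSet : ℤ) - (Fintype.card V : ℤ) + χ := by
  classical
  have hcol : G.Colorable χ := chromaticNumber_le_iff_colorable.mp (le_of_eq hχ)
  have hkey : ∀ c : Sym2 V → ℕ, IsMCColoring G c →
      (G.edgeFinset.image c).card + Fintype.card V ≤ G.edgeFinset.card + χ :=
    fun c hc => key G hG χ hcol c hc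
  have hm : Nat.card G.edgeSet = G.edgeFinset.card := by
    rw [Nat.card_eq_fintype_card, SimpleGraph.edgeFinset_card]
  have hcard : ∀ c : Sym2 V → ℕ, Nat.card (c '' G.edgeSet) = (G.edgeFinset.image c).card := by
    intro c
    rw [Nat.card_coe_set_eq, ← SimpleGraph.coe_edgeFinset, ← Finset.coe_image,
      Set.ncard_coe_finset]
  have hub : mcNumber G ≤ G.edgeFinset.card + χ - Fintype.card V := by
    apply csSup_le'
    rintro x ⟨c, hc, rfl⟩
    have h1 := hkey c hc
    rw [hcard c]
    omega
  have hnm : Fintype.card V ≤ G.edgeFinset.card + χ := by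
    have h0 : IsMCColoring G (fun _ => 0) := fun u v => ⟨(hG.preconnected u v).some, 0,
      fun _ _ => rfl⟩
    have := hkey _ h0
    omega
  rw [hm]
  omega
end

section
/- Let Γ be a simple extremal MC-coloring of a connected graph G with mc(G) = e(G) - |G| + x, and let e = xy be an edge lying in a nontrivial color class of Γ. Let H be the simple underlying graph of the contraction G/e. Then mc(H) ≥ e(H) - |H| + x. -/
open SimpleGraph

def contractEdge {V : Type*} [DecidableEq V] (G : SimpleGraph V) (x y : V) :
    SimpleGraph {v : V // v ≠ y} where
  Adj a b := (a : V) ≠ (b : V) ∧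
    (G.Adj a b ∨ ((a : V) = x ∧ G.Adj y b) ∨ ((b : V) = x ∧ G.Adj a y))
  symm := by
    constructor
    rintro a b ⟨h1, h2⟩
    refine ⟨h1.symm, ?_⟩
    rcases h2 with h | ⟨h, h'⟩ | ⟨h, h'⟩
    · exact Or.inl h.symm
    · exact Or.inr (Or.inr ⟨h, h'.symm⟩)
    · exact Or.inr (Or.inl ⟨h, h'.symm⟩)
  loopless := ⟨fun a h => h.1 rfl⟩

def colorSupport {V : Type*} (G : SimpleGraph V) (c : Sym2 V → ℕ) (k : ℕ) : Set V :=
  {v | ∃ e ∈ G.edgeSet, c e = k ∧ v ∈ e}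

def NontrivialColor {V : Type*} (G : SimpleGraph V) (c : Sym2 V → ℕ) (k : ℕ) : Prop :=
  ∃ e₁ ∈ G.edgeSet, ∃ e₂ ∈ G.edgeSet, e₁ ≠ e₂ ∧ c e₁ = k ∧ c e₂ = k

lemma merge_card (A : Set ℕ) (hA : A.Finite) (p q : ℕ) :
    A.ncard ≤ ((fun n => if n = p then q else n) '' A).ncard + 1 := by
  have hsub : A ⊆ ((fun n => if n = p then q else n) '' A) ∪ {p} := by
    intro n hn
    by_cases h : n = p
    · exact Or.inr (by simp [h])
    · exact Or.inl ⟨n, hn, by simp [h]⟩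
  calc A.ncard ≤ (((fun n => if n = p then q else n) '' A) ∪ {p}).ncard :=
        Set.ncard_le_ncard hsub ((hA.image _).union (Set.finite_singleton p))
    _ ≤ ((fun n => if n = p then q else n) '' A).ncard + ({p} : Set ℕ).ncard :=
        Set.ncard_union_le _ _
    _ = _ := by simp

lemma merge_exists {α : Type*} (f g : α → ℕ) (C : Set ℕ) (hC : C.Finite) (s : Finset α) :
    ∃ m : ℕ → ℕ, (∀ b ∈ s, m (f b) = m (g b)) ∧ C.ncard ≤ (m '' C).ncard + s.card := by
  classical
  induction s using Finset.induction_on with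
  | empty => exact ⟨id, by simp, by simp⟩
  | @insert b s hb ih =>
    obtain ⟨m0, hm0, hc0⟩ := ih
    refine ⟨(fun n => if n = m0 (g b) then m0 (f b) else n) ∘ m0, ?_, ?_⟩
    · intro b' hb'
      rcases Finset.mem_insert.mp hb' with rfl | hb'
      · by_cases he : m0 (f b') = m0 (g b') <;> simp [he]
      · simp [hm0 b' hb']
    · have h1 : ((fun n => if n = m0 (g b) then m0 (f b) else n) ∘ m0) '' C
          = (fun n => if n = m0 (g b) then m0 (f b) else n) '' (m0 '' C) := by
        rw [Set.image_comp]
      rw [h1, Finset.card_insert_of_notMem hb]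
      have h2 := merge_card (m0 '' C) (hC.image m0) (m0 (g b)) (m0 (f b))
      omega

theorem stmt18 {V : Type*} [Fintype V] [DecidableEq V] (G : SimpleGraph V)
    (hG : G.Connected) (c : Sym2 V → ℕ) (hmc : IsMCColoring G c)
    (hext : Nat.card (c '' G.edgeSet) = mcNumber G)
    (hsimple : ∀ k₁ k₂, k₁ ≠ k₂ → NontrivialColor G c k₁ → NontrivialColor G c k₂ →
      Set.Subsingleton (colorSupport G c k₁ ∩ colorSupport G c k₂))
    (x y : V) (hxy : G.Adj x y) (hnt : NontrivialColor G c (c s(x, y)))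
    (t : ℕ)
    (ht : (mcNumber G : ℤ) = (Nat.card G.edgeSet : ℤ) - (Fintype.card V : ℤ) + t) :
    (mcNumber (contractEdge G x y) : ℤ) ≥
      (Nat.card (contractEdge G x y).edgeSet : ℤ) -
        (Fintype.card {v : V // v ≠ y} : ℤ) + t := by
  classical
  have hne : x ≠ y := hxy.ne
  set H := contractEdge G x y with hH
  set φ : V → {v : V // v ≠ y} := fun v => if h : v = y then ⟨x, hne⟩ else ⟨v, h⟩ with hφdef
  set sub : {v : V // v ≠ y} → V := fun a => if (a : V) = x then y else (a : V) with hsubdef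
  have hφval : ∀ a : {v : V // v ≠ y}, φ (a : V) = a := by
    intro a
    simp only [hφdef]
    rw [dif_neg a.2]
  have hφy : φ y = ⟨x, hne⟩ := by simp [hφdef]
  have hφ_ne : ∀ (v : V) (h : v ≠ y), φ v = ⟨v, h⟩ := by
    intro v h; simp only [hφdef]; rw [dif_neg h]
  have hφx : φ x = ⟨x, hne⟩ := hφ_ne x hne
  have hφsub : ∀ a : {v : V // v ≠ y}, φ (sub a) = a := by
    intro a
    by_cases hax : (a : V) = x
    · simp only [hsubdef, if_pos hax]
      rw [hφy]
      exact Subtype.ext hax.symm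
    · simp only [hsubdef, if_neg hax]
      exact hφval a
  set Ψ : Sym2 {v : V // v ≠ y} → Sym2 V := fun e =>
    if Sym2.map Subtype.val e ∈ G.edgeSet then Sym2.map Subtype.val e
    else Sym2.map sub e with hΨdef
  have hcomp : ∀ (f : {v : V // v ≠ y} → V), (∀ a, φ (f a) = a) →
      ∀ e : Sym2 {v : V // v ≠ y}, Sym2.map φ (Sym2.map f e) = e := by
    intro f hf e
    rw [Sym2.map_map (g := φ) (f := f) e]
    have h1 : φ ∘ f = id := funext hf
    rw [h1, Sym2.map_id]
    rfl
  have hΨleft : ∀ e, Sym2.map φ (Ψ e) = e := by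
    intro e
    simp only [hΨdef]
    by_cases hmem : Sym2.map Subtype.val e ∈ G.edgeSet
    · rw [if_pos hmem]; exact hcomp _ hφval e
    · rw [if_neg hmem]; exact hcomp _ hφsub e
  have hΨinj : Function.Injective Ψ := fun e₁ e₂ h => by
    rw [← hΨleft e₁, ← hΨleft e₂, h]
  have hΨadj : ∀ (a b : {v : V // v ≠ y}), G.Adj ↑a ↑b → Ψ s(a, b) = s((a : V), (b : V)) := by
    intro a b hab
    simp only [hΨdef, Sym2.map_pair_eq]
    rw [if_pos (G.mem_edgeSet.mpr hab)]
  have hΨnadj : ∀ (a b : {v : V // v ≠ y}), ¬ G.Adj ↑a ↑b → Ψ s(a, b) = s(sub a, sub b) := by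
    intro a b hab
    simp only [hΨdef, Sym2.map_pair_eq]
    rw [if_neg (fun h => hab (G.mem_edgeSet.mp h))]
  set cn : Finset V := Finset.univ.filter (fun b => G.Adj x b ∧ G.Adj y b) with hcndef
  have hcnmem : ∀ b, b ∈ cn ↔ G.Adj x b ∧ G.Adj y b := by
    intro b; simp [hcndef]
  set L : Set (Sym2 V) := insert s(x, y) ((fun b => s(y, b)) '' (cn : Set V)) with hLdef
  have hLsub : L ⊆ G.edgeSet := by
    intro e he
    rcases Set.mem_insert_iff.mp he with rfl | ⟨b, hb, rfl⟩
    · exact G.mem_edgeSet.mpr hxy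
    · exact G.mem_edgeSet.mpr ((hcnmem b).mp hb).2
  have hLcard : L.ncard = 1 + cn.card := by
    have hinj : Set.InjOn (fun b => s(y, b)) (cn : Set V) := by
      intro b hb b' hb' hbb'
      rcases Sym2.eq_iff.mp hbb' with ⟨_, h⟩ | ⟨h1, h2⟩
      · exact h
      · exact absurd h1.symm ((hcnmem b').mp ((Finset.mem_coe).mp hb')).2.ne'
    have hnotmem : s(x, y) ∉ (fun b => s(y, b)) '' (cn : Set V) := by
      rintro ⟨b, hb, hbeq⟩
      rcases Sym2.eq_iff.mp hbeq with ⟨h1, _⟩ | ⟨_, h2⟩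
      · exact hne h1.symm
      · exact ((hcnmem b).mp ((Finset.mem_coe).mp hb)).1.ne' h2
    rw [hLdef, Set.ncard_insert_of_notMem hnotmem (Set.toFinite _),
      Set.ncard_image_of_injOn hinj, Set.ncard_coe_finset]
    omega
  have hnotL : ∀ p q : V, p ≠ y → q ≠ y → s(p, q) ∉ L := by
    intro p q hp hq hL
    rcases Set.mem_insert_iff.mp hL with heq | ⟨b', _, heq⟩
    · rcases Sym2.eq_iff.mp heq with ⟨_, h2⟩ | ⟨h1, _⟩
      · exact hq h2
      · exact hp h1
    · rcases Sym2.eq_iff.mp heq.symm with ⟨h1, _⟩ | ⟨_, h2⟩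
      · exact hp h1
      · exact hq h2
  have hsur : ∀ p q : V, G.Adj p q → s(p, q) ∉ L → q ≠ y → s(p, q) ∈ Ψ '' H.edgeSet := by
    intro p q hadj hnL hqy
    by_cases hpy : p = y
    · rw [hpy] at hadj hnL
      have hyq : G.Adj y q := hadj
      have hqx : q ≠ x := by
        intro h
        exact hnL (Set.mem_insert_iff.mpr (Or.inl (by rw [h]; exact Sym2.eq_swap)))
      have hnadj : ¬ G.Adj x q := by
        intro h
        exact hnL (Set.mem_insert_iff.mpr
          (Or.inr ⟨q, (Finset.mem_coe).mpr ((hcnmem q).mpr ⟨h, hyq⟩), rfl⟩))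
      rw [hpy]
      refine ⟨s((⟨q, hqy⟩ : {v : V // v ≠ y}), (⟨x, hne⟩ : {v : V // v ≠ y})), ?_, ?_⟩
      · exact H.mem_edgeSet.mpr ⟨hqx, Or.inr (Or.inr ⟨rfl, hyq.symm⟩)⟩
      · rw [hΨnadj _ _ (fun h => hnadj h.symm)]
        have h1 : sub ⟨q, hqy⟩ = q := by simp [hsubdef, hqx]
        have h2 : sub ⟨x, hne⟩ = y := by simp [hsubdef]
        rw [h1, h2]
        exact Sym2.eq_swap
    · refine ⟨s((⟨p, hpy⟩ : {v : V // v ≠ y}), (⟨q, hqy⟩ : {v : V // v ≠ y})), ?_, ?_⟩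
      · exact H.mem_edgeSet.mpr ⟨hadj.ne, Or.inl hadj⟩
      · exact hΨadj _ _ hadj
  have himg : Ψ '' H.edgeSet = G.edgeSet \ L := by
    apply Set.Subset.antisymm
    · rintro e' ⟨e, he, rfl⟩
      induction e using Sym2.ind with
      | _ a b =>
        rw [H.mem_edgeSet] at he
        obtain ⟨hab, hor⟩ := he
        by_cases hadj : G.Adj ↑a ↑b
        · rw [hΨadj a b hadj]
          exact ⟨G.mem_edgeSet.mpr hadj, hnotL _ _ a.2 b.2⟩
        · have hcase : ((a : V) = x ∧ G.Adj y ↑b) ∨ ((b : V) = x ∧ G.Adj ↑a y) := by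
            rcases hor with h | h | h
            · exact absurd h hadj
            · exact Or.inl h
            · exact Or.inr h
          rw [hΨnadj a b hadj]
          rcases hcase with ⟨hax, hyb⟩ | ⟨hbx, hay⟩
          · have hbx : (b : V) ≠ x := fun h => hab (hax.trans h.symm)
            simp only [hsubdef]
            rw [if_pos hax, if_neg hbx]
            refine ⟨G.mem_edgeSet.mpr hyb, ?_⟩
            intro hL
            rcases Set.mem_insert_iff.mp hL with heq | ⟨b', hb', heq⟩
            · rcases Sym2.eq_iff.mp heq with ⟨h1, _⟩ | ⟨_, h2⟩
              · exact hne h1.symm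
              · exact hbx h2
            · rcases Sym2.eq_iff.mp heq.symm with ⟨_, h2⟩ | ⟨_, h2⟩
              · have hxb : G.Adj x ↑b := by
                  rw [h2]; exact ((hcnmem b').mp ((Finset.mem_coe).mp hb')).1
                exact hadj (by rw [hax]; exact hxb)
              · exact b.2 h2
          · have hax' : (a : V) ≠ x := fun h => hab (h.trans hbx.symm)
            simp only [hsubdef]
            rw [if_neg hax', if_pos hbx]
            refine ⟨G.mem_edgeSet.mpr hay, ?_⟩
            intro hL
            rcases Set.mem_insert_iff.mp hL with heq | ⟨b', hb', heq⟩
            · rcases Sym2.eq_iff.mp heq with ⟨h1, _⟩ | ⟨_, h2⟩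
              · exact hax' h1
              · exact hne h2.symm
            · rcases Sym2.eq_iff.mp heq.symm with ⟨h1, _⟩ | ⟨h1, _⟩
              · exact a.2 h1
              · have hxa : G.Adj x ↑a := by
                  rw [h1]; exact ((hcnmem b').mp ((Finset.mem_coe).mp hb')).1
                exact hadj (by rw [hbx]; exact hxa.symm)
    · rintro e ⟨he, hnL⟩
      induction e using Sym2.ind with
      | _ p q =>
        rw [G.mem_edgeSet] at he
        by_cases hqy : q = y
        · rw [hqy] at he hnL ⊢
          have hpy : p ≠ y := he.ne
          have h := hsur y p he.symm (by rw [Sym2.eq_swap]; exact hnL) hpy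
          rwa [Sym2.eq_swap] at h
        · exact hsur p q he hnL hqy
  -- edge counting
  have hEH : H.edgeSet.ncard + L.ncard = G.edgeSet.ncard := by
    rw [← Set.ncard_image_of_injective H.edgeSet hΨinj, himg]
    exact Set.ncard_diff_add_ncard_of_subset hLsub (Set.toFinite _)
  -- color merging
  obtain ⟨mfun, hmerge, hmcard⟩ := merge_exists (fun b => c s(x, b)) (fun b => c s(y, b))
    (c '' G.edgeSet) (Set.toFinite _) cn
  set c' : Sym2 {v : V // v ≠ y} → ℕ := fun e => mfun (c (Ψ e)) with hc'def
  -- key edge-transfer lemma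
  have key1 : ∀ p : V, G.Adj p y → p ≠ x →
      H.Adj (φ p) (φ y) ∧ c' s(φ p, φ y) = mfun (c s(p, y)) := by
    intro p hp hpx
    have hpy : p ≠ y := hp.ne
    rw [hφ_ne p hpy, hφy]
    constructor
    · exact ⟨hpx, Or.inr (Or.inr ⟨rfl, hp⟩)⟩
    · by_cases hadj : G.Adj p x
      · have hΨe : Ψ s((⟨p, hpy⟩ : {v : V // v ≠ y}), (⟨x, hne⟩ : {v : V // v ≠ y})) = s(p, x) :=
          hΨadj _ _ hadj
        have hpcn : p ∈ cn := (hcnmem p).mpr ⟨hadj.symm, hp.symm⟩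
        have hm := hmerge p hpcn
        simp only [hc'def]
        rw [hΨe]
        have e1 : s(p, x) = s(x, p) := Sym2.eq_swap
        have e2 : s(y, p) = s(p, y) := Sym2.eq_swap
        rw [e1, hm, e2]
      · have hΨe : Ψ s((⟨p, hpy⟩ : {v : V // v ≠ y}), (⟨x, hne⟩ : {v : V // v ≠ y})) = s(p, y) := by
          rw [hΨnadj _ _ hadj]
          have h1 : sub ⟨p, hpy⟩ = p := by simp [hsubdef, hpx]
          have h2 : sub ⟨x, hne⟩ = y := by simp [hsubdef]
          rw [h1, h2]
        simp only [hc'def]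
        rw [hΨe]
  have key : ∀ p q : V, G.Adj p q → s(p, q) ≠ s(x, y) →
      H.Adj (φ p) (φ q) ∧ c' s(φ p, φ q) = mfun (c s(p, q)) := by
    intro p q hadj hexy
    by_cases hqy : q = y
    · have hpx : p ≠ x := by
        intro h
        exact hexy (by rw [h, hqy])
      have hp : G.Adj p y := hqy ▸ hadj
      obtain ⟨h1, h2⟩ := key1 p hp hpx
      rw [hqy]
      exact ⟨h1, h2.trans (by rw [show s(p, y) = s(p, q) from by rw [hqy]])⟩
    · by_cases hpy : p = y
      · have hqx : q ≠ x := by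
          intro h
          exact hexy (by rw [h, hpy]; exact Sym2.eq_swap)
        have hq : G.Adj q y := by rw [← hpy]; exact hadj.symm
        obtain ⟨h1, h2⟩ := key1 q hq hqx
        rw [hpy]
        refine ⟨h1.symm, ?_⟩
        have e1 : s(φ y, φ q) = s(φ q, φ y) := Sym2.eq_swap
        have e2 : s(q, y) = s(y, q) := Sym2.eq_swap
        rw [e1, h2, e2]
      · rw [hφ_ne p hpy, hφ_ne q hqy]
        constructor
        · exact ⟨hadj.ne, Or.inl hadj⟩
        · simp only [hc'def]
          rw [hΨadj _ _ hadj]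
  -- walk transfer
  have hwalk : ∀ (u v : V) (w : G.Walk u v) (mm : ℕ), (∀ e ∈ w.edges, c e = mm) →
      ∃ q : H.Walk (φ u) (φ v), ∀ e ∈ q.edges, c' e = mfun mm := by
    intro u v w
    induction w with
    | nil => exact fun mm _ => ⟨SimpleGraph.Walk.nil, by simp⟩
    | @cons a b d h p ih =>
      intro mm hmm
      obtain ⟨q, hq⟩ := ih mm (fun e he => hmm e (by
        rw [SimpleGraph.Walk.edges_cons]; exact List.mem_cons_of_mem _ he))
      by_cases hxyE : s(a, b) = s(x, y)
      · have hab : φ b = φ a := by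
          rcases Sym2.eq_iff.mp hxyE with ⟨ha, hb⟩ | ⟨ha, hb⟩
          · rw [ha, hb, hφx, hφy]
          · rw [ha, hb, hφx, hφy]
        refine ⟨q.copy hab rfl, ?_⟩
        intro e he
        rw [SimpleGraph.Walk.edges_copy] at he
        exact hq e he
      · obtain ⟨hadj', hcol⟩ := key a b h hxyE
        refine ⟨SimpleGraph.Walk.cons hadj' q, ?_⟩
        intro e he
        rw [SimpleGraph.Walk.edges_cons, List.mem_cons] at he
        rcases he with rfl | he
        · rw [hcol, hmm s(a, b) (by rw [SimpleGraph.Walk.edges_cons]; exact List.mem_cons_self)]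
        · exact hq e he
  have hmc' : IsMCColoring H c' := by
    intro a b
    obtain ⟨w, mm, hw⟩ := hmc ↑a ↑b
    obtain ⟨q, hq⟩ := hwalk _ _ w mm hw
    refine ⟨q.copy (hφval a) (hφval b), mfun mm, ?_⟩
    intro e he
    rw [SimpleGraph.Walk.edges_copy] at he
    exact hq e he
  -- the image of the new coloring
  have hcover1 : ∀ e ∈ G.edgeSet, e ≠ s(x, y) →
      ∃ ee ∈ H.edgeSet, mfun (c (Ψ ee)) = mfun (c e) := by
    intro e
    induction e using Sym2.ind with
    | _ p q =>
      intro he hexy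
      obtain ⟨hadj', hcol⟩ := key p q (G.mem_edgeSet.mp he) hexy
      refine ⟨s(φ p, φ q), H.mem_edgeSet.mpr hadj', ?_⟩
      simpa only [hc'def] using hcol
  have hcover : ∀ e ∈ G.edgeSet, ∃ ee ∈ H.edgeSet, mfun (c (Ψ ee)) = mfun (c e) := by
    intro e he
    by_cases hexy : e = s(x, y)
    · obtain ⟨e₁, he₁, e₂, he₂, hne12, hc1, hc2⟩ := hnt
      have hex : ∃ e₀ ∈ G.edgeSet, e₀ ≠ s(x, y) ∧ c e₀ = c s(x, y) := by
        by_cases h1 : e₁ = s(x, y)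
        · exact ⟨e₂, he₂, fun h => hne12 (h1.trans h.symm), hc2⟩
        · exact ⟨e₁, he₁, h1, hc1⟩
      obtain ⟨e₀, he₀, hne0, hc0⟩ := hex
      obtain ⟨ee, hee, hmee⟩ := hcover1 e₀ he₀ hne0
      exact ⟨ee, hee, by rw [hmee, hc0, hexy]⟩
    · exact hcover1 e he hexy
  have himgc : c' '' H.edgeSet = mfun '' (c '' G.edgeSet) := by
    apply Set.Subset.antisymm
    · rintro n ⟨e, he, rfl⟩
      have hΨe : Ψ e ∈ G.edgeSet := ((himg ▸ Set.mem_image_of_mem Ψ he)).1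
      exact ⟨c (Ψ e), Set.mem_image_of_mem c hΨe, rfl⟩
    · rintro n ⟨k0, ⟨e, he, rfl⟩, rfl⟩
      obtain ⟨ee, hee, hmee⟩ := hcover e he
      exact ⟨ee, hee, hmee⟩
  -- putting the numbers together
  have hmemset : Set.ncard (c' '' H.edgeSet) ∈
      {n : ℕ | ∃ c'' : Sym2 {v : V // v ≠ y} → ℕ,
        IsMCColoring H c'' ∧ Nat.card (c'' '' H.edgeSet) = n} :=
    ⟨c', hmc', Nat.card_coe_set_eq _⟩
  have hbdd : BddAbove {n : ℕ | ∃ c'' : Sym2 {v : V // v ≠ y} → ℕ,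
      IsMCColoring H c'' ∧ Nat.card (c'' '' H.edgeSet) = n} := by
    refine ⟨H.edgeSet.ncard, ?_⟩
    rintro n ⟨c'', _, rfl⟩
    rw [Nat.card_coe_set_eq]
    exact Set.ncard_image_le (Set.toFinite _)
  have hle : Set.ncard (c' '' H.edgeSet) ≤ mcNumber H := le_csSup hbdd hmemset
  have hC : (c '' G.edgeSet).ncard = mcNumber G := by
    rw [← Nat.card_coe_set_eq]; exact hext
  have hVc : Fintype.card {v : V // v ≠ y} + 1 = Fintype.card V := by
    have h1 : Fintype.card {v : V // v ≠ y} = Fintype.card V - 1 := by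
      rw [Fintype.card_subtype_compl (· = y), Fintype.card_subtype_eq]
    have h2 : 1 ≤ Fintype.card V := Fintype.card_pos_iff.mpr ⟨y⟩
    omega
  have hEG : Nat.card G.edgeSet = G.edgeSet.ncard := Nat.card_coe_set_eq _
  have hEHnat : Nat.card H.edgeSet = H.edgeSet.ncard := Nat.card_coe_set_eq _
  -- final arithmetic
  rw [hEHnat]
  have i1 : ((c '' G.edgeSet).ncard : ℤ) ≤ ((mfun '' (c '' G.edgeSet)).ncard : ℤ) + cn.card := by
    exact_mod_cast hmcard
  have i2 : ((mfun '' (c '' G.edgeSet)).ncard : ℤ) ≤ (mcNumber H : ℤ) := by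
    rw [← himgc]; exact_mod_cast hle
  have i3 : (H.edgeSet.ncard : ℤ) + (1 + cn.card) = (G.edgeSet.ncard : ℤ) := by
    have h := hEH
    rw [hLcard] at h
    exact_mod_cast h
  have i4 : ((c '' G.edgeSet).ncard : ℤ) = (G.edgeSet.ncard : ℤ) - Fintype.card V + t := by
    rw [hC, ht, hEG]
  have i5 : (Fintype.card {v : V // v ≠ y} : ℤ) + 1 = Fintype.card V := by exact_mod_cast hVc
  linarith
end
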